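/- Let N be a finitely generated module over a Noetherian ring R, and p ∈ Supp(N). Then there exists a nonzero R-module homomorphism f : N → R/p, and the image of f equals b/p for some ideal b of R with b strictly containing p. -/

import Mathlib

open CategoryTheory Limits Opposite

universe u

noncomputable section

variable (R : Type u) [CommRing R]

/-- A Serre subcategory of the category of `R`-modules, described as a predicate on
`ModuleCat R` closed under isomorphisms, submodules, quotients and extensions. -/
structure SerreClass : Type (u + 1) where
  mem : ModuleCat.{u} R → Prop
  mem_of_iso : ∀ {X Y : ModuleCat.{u} R}, (X ≅ Y) → mem X → mem Y
  mem_submodule : ∀ (X : ModuleCat.{u} R) (A : Submodule R X), mem X → mem (ModuleCat.of R A)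
  mem_quotient : ∀ (X : ModuleCat.{u} R) (A : Submodule R X), mem X →
    mem (ModuleCat.of R (X ⧸ A))
  mem_of_extension : ∀ (X : ModuleCat.{u} R) (A : Submodule R X),
    mem (ModuleCat.of R A) → mem (ModuleCat.of R (X ⧸ A)) → mem X

/-- A Melkersson subcategory: a Serre subcategory such that, for every ideal `b` and every
`b`-torsion module `X`, if `(0 :_X b)` belongs to the class then so does `X`. -/
structure MelkerssonClass extends SerreClass R where
  mem_of_torsion : ∀ (b : Ideal R) (X : ModuleCat.{u} R),
    (∀ x : X, ∃ n : ℕ, ∀ r ∈ b ^ n, r • x = 0) →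
    mem (ModuleCat.of R (Submodule.torsionBySet R X (b : Set R))) → mem X

variable (a : Ideal R) (M N : Type u) [AddCommGroup M] [Module R M]
  [AddCommGroup N] [Module R N]

/-- `M ⧸ aⁿM` as an object of `ModuleCat R`. -/
abbrev ModQuotPow (n : ℕ) : ModuleCat.{u} R :=
  ModuleCat.of R (M ⧸ (a ^ n • ⊤ : Submodule R M))

/-- The canonical projection `M ⧸ aⁿ⁺¹M → M ⧸ aⁿM`. -/
def modQuotPowHom (n : ℕ) : ModQuotPow R a M (n + 1) ⟶ ModQuotPow R a M n :=
  ModuleCat.ofHom (Submodule.mapQ _ _ LinearMap.id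
    (by
      refine le_trans (Submodule.smul_mono (Ideal.pow_le_pow_right (Nat.le_succ n)) (le_refl (⊤ : Submodule R M))) ?_
      rw [Submodule.comap_id]))

/-- The direct system `n ↦ Extⁱ(M ⧸ aⁿM, N)`. -/
def glcDiagram (i : ℕ) : ℕ ⥤ ModuleCat.{u} R :=
  Functor.ofSequence
    (X := fun n => ((Ext R (ModuleCat.{u} R) i).obj (op (ModQuotPow R a M n))).obj
      (ModuleCat.of R N))
    (fun n => ((Ext R (ModuleCat.{u} R) i).map (modQuotPowHom R a M n).op).app
      (ModuleCat.of R N))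

/-- The `i`-th generalized local cohomology module
`Hⁱ_a(M, N) = colim_n Extⁱ(M ⧸ aⁿM, N)`. -/
def glc (i : ℕ) : ModuleCat.{u} R :=
  colimit (glcDiagram R a M N i)

/-- `M` has projective dimension at most `n`: all Ext-groups `Extⁱ(M, -)` with `i > n` vanish. -/
def projDimLE (n : ℕ) : Prop :=
  ∀ i : ℕ, n < i → ∀ X : ModuleCat.{u} R,
    Subsingleton (((Ext R (ModuleCat.{u} R) i).obj (op (ModuleCat.of R M))).obj X)

/-- The Serre cohomological dimension `cd_{(a,S)}(M,N)`, an element of `WithBot ℕ∞`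
(with `sup ∅ = ⊥ = -∞`). -/
def serreCD (S : SerreClass R) : WithBot ℕ∞ :=
  sSup ((fun i : ℕ => ((i : ℕ∞) : WithBot ℕ∞)) '' {i : ℕ | ¬ S.mem (glc R a M N i)})

/-! Since `p ∈ Supp N`, Nakayama's lemma gives `p ∈ Supp (N/pN)`, so the annihilator of `N/pN`
is exactly `p`: over the domain `R/p` the module `N/pN` is faithful, hence not torsion, and it is
finitely presented because `R` is Noetherian. A functional on the generic fibre of `N/pN` that is
nonzero on a non-torsion element becomes, after clearing denominators, a nonzero map
`N/pN → R/p`, hence `N → R/p`. Finally every submodule of `R/p` is `b/p` for its preimage `b`,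
and `p ⊊ b` as soon as the submodule is nonzero. -/

section Domain

variable {D X : Type*} [CommRing D] [IsDomain D] [AddCommGroup X] [Module D X]

theorem Module.not_isTorsion_of_faithfulSMul [Module.Finite D X] [FaithfulSMul D X] :
    ¬ Module.IsTorsion D X := by
  intro h
  obtain ⟨a, ha, ha_nzd⟩ := Submodule.annihilator_top_inter_nonZeroDivisors h
  rw [SetLike.mem_coe, Submodule.annihilator_top, Module.annihilator_eq_bot.mpr ‹_›] at ha
  exact nonZeroDivisors.ne_zero ha_nzd ha

theorem exists_linearMap_fractionRing_ne_zero (hX : ¬ Module.IsTorsion D X) :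
    ∃ g : X →ₗ[D] FractionRing D, g ≠ 0 := by
  obtain ⟨x, hx⟩ : ∃ x : X, ∀ s : nonZeroDivisors D, s • x ≠ 0 := by
    simpa [Module.IsTorsion] using hX
  let ι := LocalizedModule.mkLinearMap (nonZeroDivisors D) X
  have hιx : ι x ≠ 0 := fun h ↦ by
    obtain ⟨s, hs⟩ := (IsLocalizedModule.eq_zero_iff (nonZeroDivisors D) ι).mp h
    exact hx s hs
  obtain ⟨φ, hφ⟩ : ∃ φ : Module.Dual (FractionRing D) (LocalizedModule (nonZeroDivisors D) X),
      φ (ι x) ≠ 0 := by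
    by_contra! h
    exact hιx ((Module.forall_dual_apply_eq_zero_iff _ _).mp h)
  exact ⟨φ.restrictScalars D ∘ₗ ι, fun h ↦ hφ (LinearMap.congr_fun h x)⟩

theorem exists_linearMap_ne_zero_of_fractionRing {K : Type*} [Field K] [Algebra D K]
    [IsFractionRing D K] [Module.FinitePresentation D X] (g : X →ₗ[D] K) (hg : g ≠ 0) :
    ∃ h : X →ₗ[D] D, h ≠ 0 := by
  obtain ⟨h, s, hs⟩ := Module.FinitePresentation.exists_lift_of_isLocalizedModule
    (nonZeroDivisors D) (Algebra.linearMap D K) g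
  refine ⟨h, fun h0 ↦ hg ?_⟩
  ext x
  have hx := LinearMap.congr_fun hs x
  simp only [h0, LinearMap.comp_zero, LinearMap.zero_apply, LinearMap.smul_apply] at hx
  exact (smul_eq_zero.mp hx.symm).resolve_left (nonZeroDivisors.coe_ne_zero s)

theorem Module.exists_dual_ne_zero_of_faithfulSMul [Module.FinitePresentation D X]
    [FaithfulSMul D X] : ∃ h : Module.Dual D X, h ≠ 0 := by
  obtain ⟨g, hg⟩ :=
    exists_linearMap_fractionRing_ne_zero (Module.not_isTorsion_of_faithfulSMul (D := D) (X := X))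
  exact exists_linearMap_ne_zero_of_fractionRing g hg

end Domain

section Quotient

variable {R N}

theorem faithfulSMul_quotient_of_mem_support [Module.Finite R N] {p : PrimeSpectrum R}
    (hp : p ∈ Module.support R N) :
    FaithfulSMul (R ⧸ p.asIdeal) (N ⧸ (p.asIdeal • ⊤ : Submodule R N)) := by
  have hann : Module.annihilator R (N ⧸ (p.asIdeal • ⊤ : Submodule R N)) ≤ p.asIdeal := by
    refine Module.mem_support_iff_of_finite.mp ?_
    rw [Module.support_quotient]
    exact ⟨hp, fun _ h ↦ h⟩
  rw [← Module.annihilator_eq_bot, ← le_bot_iff,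
    ← Ideal.map_comap_of_surjective _ Ideal.Quotient.mk_surjective (Module.annihilator _ _),
    ← Ideal.Quotient.algebraMap_eq, Module.comap_annihilator, Ideal.Quotient.algebraMap_eq,
    ← Ideal.map_quotient_self p.asIdeal]
  exact Ideal.map_mono hann

theorem exists_linearMap_quotient_ne_zero [IsNoetherianRing R] [Module.Finite R N]
    {p : PrimeSpectrum R} (hp : p ∈ Module.support R N) :
    ∃ f : N →ₗ[R] R ⧸ p.asIdeal, f ≠ 0 := by
  let Q := p.asIdeal • (⊤ : Submodule R N)
  have := faithfulSMul_quotient_of_mem_support hp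
  have := Module.finitePresentation_of_finite (R ⧸ p.asIdeal) (N ⧸ Q)
  obtain ⟨φ, hφ⟩ := Module.exists_dual_ne_zero_of_faithfulSMul (D := R ⧸ p.asIdeal) (X := N ⧸ Q)
  refine ⟨φ.restrictScalars R ∘ₗ Q.mkQ, fun h0 ↦ hφ ?_⟩
  refine LinearMap.ext fun x ↦ ?_
  obtain ⟨n, rfl⟩ := Submodule.mkQ_surjective _ x
  exact LinearMap.congr_fun h0 n

theorem Submodule.exists_lt_and_eq_map_of_ne_bot (I : Ideal R) (P : Submodule R (R ⧸ I))
    (hP : P ≠ ⊥) : ∃ b : Ideal R, I < b ∧ P = Submodule.map (Algebra.linearMap R (R ⧸ I)) b := by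
  have hsurj : Function.Surjective (Algebra.linearMap R (R ⧸ I)) := Ideal.Quotient.mk_surjective
  have hI : I ≤ (⊥ : Submodule R (R ⧸ I)).comap (Algebra.linearMap R (R ⧸ I)) := fun r hr ↦ by
    simp [Ideal.Quotient.eq_zero_iff_mem.mpr hr]
  refine ⟨P.comap (Algebra.linearMap R (R ⧸ I)),
    lt_of_le_of_ne (hI.trans (Submodule.comap_mono bot_le)) fun h ↦ hP ?_,
    (Submodule.map_comap_eq_of_surjective hsurj P).symm⟩
  rw [← Submodule.map_comap_eq_of_surjective hsurj P, ← h]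
  exact eq_bot_iff.mpr (Submodule.map_le_iff_le_comap.mpr hI)

end Quotient

theorem stmt18 [IsNoetherianRing R] [Module.Finite R N] (p : PrimeSpectrum R)
    (hp : p ∈ Module.support R N) :
    (∃ f : N →ₗ[R] R ⧸ p.asIdeal, f ≠ 0) ∧
    (∀ f : N →ₗ[R] R ⧸ p.asIdeal, f ≠ 0 →
      ∃ b : Ideal R, p.asIdeal < b ∧
        LinearMap.range f =
          Submodule.map (Algebra.linearMap R (R ⧸ p.asIdeal)) b) :=
  ⟨exists_linearMap_quotient_ne_zero hp, fun f hf ↦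
    Submodule.exists_lt_and_eq_map_of_ne_bot _ _ (LinearMap.range_eq_bot.not.mpr hf)⟩
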